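/- Let F ⊆ K be fields and let ν : K^× → ℤ be a valuation on K (ν(ab) = ν(a) + ν(b), ν(a+b) ≥ min(ν(a),ν(b))) which is trivial on F^× (ν(α) = 0 for all α ∈ F^×) and unbounded below on K^×. If U ⊆ K is an F-vector subspace of finite codimension in K, then the set {ν(u) : u ∈ U, u ≠ 0} is unbounded from below. -/
import Mathlib


/-- Let `F ⊆ K` be fields and `ν : Kˣ → ℤ` a valuation trivial on `F` and unbounded
below on `Kˣ`.  If `U ⊆ K` is an `F`-subspace of finite codimension, then
`{ν u : u ∈ U, u ≠ 0}` is unbounded from below. -/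
theorem stmt_9 {F K : Type*} [Field F] [Field K] [Algebra F K] (ν : Kˣ → ℤ)
    (hmul : ∀ a b : Kˣ, ν (a * b) = ν a + ν b)
    (hadd : ∀ (a b : Kˣ) (h : (a : K) + (b : K) ≠ 0),
      min (ν a) (ν b) ≤ ν (Units.mk0 ((a : K) + (b : K)) h))
    (htriv : ∀ u : Kˣ, (u : K) ∈ Set.range (algebraMap F K) → ν u = 0)
    (hunb : ∀ N : ℤ, ∃ u : Kˣ, ν u < N)
    (U : Submodule F K) (hU : FiniteDimensional F (K ⧸ U)) :
    ∀ N : ℤ, ∃ u : Kˣ, (u : K) ∈ U ∧ ν u < N := by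
  classical
  -- basic valuation facts
  have hone : ν 1 = 0 := by have := hmul 1 1; simp at this; linarith
  have hval : ∀ (z : K) (h : z ≠ 0) (u : Kˣ), (u : K) = z →
      ν (Units.mk0 z h) = ν u := by
    intro z h u hu
    congr 1
    exact Units.ext hu.symm
  have hneg : ∀ u : Kˣ, ν (-u) = ν u := by
    have hm1 : ν (-1 : Kˣ) = 0 := by
      have := hmul (-1) (-1); simp [hone] at this; linarith
    intro u
    have : (-u : Kˣ) = (-1) * u := by ext; simp
    rw [this, hmul, hm1, zero_add]
  -- sums of elements of valuation ≥ M
  have hgemin : ∀ (M : ℤ) (s : Finset (Fin (Module.finrank F (K ⧸ U) + 1)))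
      (f : Fin (Module.finrank F (K ⧸ U) + 1) → K),
      (∀ i ∈ s, f i = 0 ∨ ∃ h : f i ≠ 0, M ≤ ν (Units.mk0 (f i) h)) →
      ((∑ i ∈ s, f i) = 0 ∨ ∃ h : (∑ i ∈ s, f i) ≠ 0,
        M ≤ ν (Units.mk0 (∑ i ∈ s, f i) h)) := by
    intro M s f hf
    refine Finset.sum_induction f
      (fun z => z = 0 ∨ ∃ h : z ≠ 0, M ≤ ν (Units.mk0 z h)) ?_ (Or.inl rfl) hf
    rintro a b (rfl | ⟨ha, hMa⟩) hb
    · simpa using hb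
    rcases hb with rfl | ⟨hb, hMb⟩
    · simpa using Or.inr ⟨ha, hMa⟩
    by_cases hab : a + b = 0
    · exact Or.inl hab
    · refine Or.inr ⟨hab, ?_⟩
      have := hadd (Units.mk0 a ha) (Units.mk0 b hb) (by simpa using hab)
      have heq : ν (Units.mk0 ((Units.mk0 a ha : K) + (Units.mk0 b hb : K))
          (by simpa using hab)) = ν (Units.mk0 (a + b) hab) := by
        congr 1
      rw [heq] at this
      exact le_trans (le_min hMa hMb) this
  -- a + b with ν a < ν b (or b = 0) has valuation ν a
  have hstrict : ∀ (a : Kˣ) (b : K),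
      (b = 0 ∨ ∃ h : b ≠ 0, ν a < ν (Units.mk0 b h)) →
      ∃ h : (a : K) + b ≠ 0, ν (Units.mk0 ((a : K) + b) h) = ν a := by
    rintro a b (rfl | ⟨hb, hab⟩)
    · exact ⟨by simp, hval _ _ a (by simp)⟩
    · have hne : (a : K) + b ≠ 0 := by
        intro h0
        have hba : b = ((-a : Kˣ) : K) := by
          simpa using eq_neg_of_add_eq_zero_right h0
        rw [hval b hb (-a) hba.symm, hneg] at hab
        exact lt_irrefl _ hab
      refine ⟨hne, le_antisymm ?_ ?_⟩
      · -- ν (a+b) ≤ ν a : use a = (a+b) + (-b)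
        have hsum : ((Units.mk0 ((a : K) + b) hne : K)) + ((-(Units.mk0 b hb) : Kˣ) : K)
            = (a : K) := by
          simp only [Units.val_neg, Units.val_mk0]; ring
        have hne2 : ((Units.mk0 ((a : K) + b) hne : K)) + ((-(Units.mk0 b hb) : Kˣ) : K) ≠ 0 := by
          rw [hsum]; exact a.ne_zero
        have h2 := hadd (Units.mk0 ((a : K) + b) hne) (-(Units.mk0 b hb)) hne2
        have h3 : ν (Units.mk0 _ hne2) = ν a := hval _ hne2 a hsum.symm
        rw [h3, hneg] at h2
        rcases le_or_gt (ν (Units.mk0 ((a : K) + b) hne)) (ν (Units.mk0 b hb)) with hc | hc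
        · rw [min_eq_left hc] at h2; exact h2
        · rw [min_eq_right hc.le] at h2; linarith
      · have h2 := hadd a (Units.mk0 b hb) (by simpa using hne)
        have h3 : ν (Units.mk0 ((a : K) + ((Units.mk0 b hb : Kˣ) : K)) (by simpa using hne))
            = ν (Units.mk0 ((a : K) + b) hne) := by congr 1
        rw [h3] at h2
        exact le_trans (le_min (le_refl _) hab.le) h2
  -- powers
  intro N
  obtain ⟨x, hx⟩ := hunb (min N 0 - 1)
  have hx0 : ν x < 0 := lt_of_lt_of_le hx (by have := min_le_right N 0; linarith)
  have hxN : ν x < N := lt_of_lt_of_le hx (by have := min_le_left N 0; linarith)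
  have hpow : ∀ m : ℕ, ν (x ^ m) = m * ν x := by
    intro m
    induction m with
    | zero => simpa using hone
    | succ k ih => rw [pow_succ, hmul, ih]; push_cast; ring
  set n := Module.finrank F (K ⧸ U) with hn
  -- linear dependence of x, x^2, ..., x^(n+1) mod U
  have hdep : ¬ LinearIndependent F (fun i : Fin (n + 1) => U.mkQ ((x : K) ^ (i.val + 1))) := by
    intro h
    have := h.fintype_card_le_finrank
    simp only [Fintype.card_fin] at this
    omega
  obtain ⟨g, hg0, i0, hgi0⟩ := Fintype.not_linearIndependent_iff.mp hdep
  set f : Fin (n + 1) → K := fun i => g i • (x : K) ^ (i.val + 1) with hf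
  set y : K := ∑ i, f i with hy
  have hyU : y ∈ U := by
    rw [← Submodule.Quotient.mk_eq_zero, ← U.mkQ_apply, hy, map_sum]
    simpa [hf, map_smul] using hg0
  -- valuation of each term
  have hterm : ∀ i : Fin (n + 1), g i ≠ 0 →
      ∃ h : f i ≠ 0, ν (Units.mk0 (f i) h) = (i.val + 1 : ℤ) * ν x := by
    intro i hgi
    have halg : algebraMap F K (g i) ≠ 0 := by
      simpa using (map_ne_zero_iff _ (algebraMap F K).injective).mpr hgi
    have hne : f i ≠ 0 := by
      simp only [hf, Algebra.smul_def]
      exact mul_ne_zero halg (pow_ne_zero _ x.ne_zero)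
    refine ⟨hne, ?_⟩
    have heq : ((Units.mk0 (algebraMap F K (g i)) halg * x ^ (i.val + 1) : Kˣ) : K) = f i := by
      simp [hf, Algebra.smul_def]
    rw [hval _ hne _ heq, hmul, htriv _ ⟨g i, rfl⟩, hpow, zero_add]
    push_cast; ring
  -- restrict to support
  set s : Finset (Fin (n + 1)) := Finset.univ.filter (fun i => g i ≠ 0) with hs
  have hi0s : i0 ∈ s := by simp [hs, hgi0]
  have hsne : s.Nonempty := ⟨i0, hi0s⟩
  set j := s.max' hsne with hj
  have hjs : j ∈ s := s.max'_mem hsne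
  have hgj : g j ≠ 0 := by simpa [hs] using hjs
  have hys : y = ∑ i ∈ s, f i := by
    rw [hy, hs]
    refine (Finset.sum_filter_of_ne ?_).symm
    intro i _ hfi
    intro hgi
    exact hfi (by simp [hf, hgi])
  have hsplit : y = f j + ∑ i ∈ s.erase j, f i := by
    rw [hys, Finset.add_sum_erase s f hjs]
  -- the rest has valuation ≥ j * ν x
  have hrest := hgemin ((j.val : ℤ) * ν x) (s.erase j) f ?_
  · obtain ⟨hfj, hvfj⟩ := hterm j hgj
    have hmain : ν (Units.mk0 (f j) hfj) < (j.val : ℤ) * ν x := by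
      rw [hvfj]
      have : ((j.val : ℤ) + 1) * ν x < (j.val : ℤ) * ν x := by nlinarith
      linarith
    have hb : (∑ i ∈ s.erase j, f i) = 0 ∨
        ∃ h : (∑ i ∈ s.erase j, f i) ≠ 0,
          ν (Units.mk0 (f j) hfj) < ν (Units.mk0 (∑ i ∈ s.erase j, f i) h) := by
      rcases hrest with h0 | ⟨h0, hM⟩
      · exact Or.inl h0
      · exact Or.inr ⟨h0, lt_of_lt_of_le hmain hM⟩
    obtain ⟨hyne0, hvy⟩ := hstrict (Units.mk0 (f j) hfj) (∑ i ∈ s.erase j, f i) hb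
    have hyne : y ≠ 0 := by rw [hsplit]; exact hyne0
    refine ⟨Units.mk0 y hyne, hyU, ?_⟩
    have : ν (Units.mk0 y hyne) = ν (Units.mk0 (f j) hfj) := by
      rw [← hvy]
      congr 1
      exact Units.ext (by simp [hsplit])
    rw [this, hvfj]
    have h1 : ((j.val : ℤ) + 1) * ν x ≤ 1 * ν x := by
      have hj0 : (0 : ℤ) ≤ (j.val : ℤ) := Int.natCast_nonneg _
      have : (1 : ℤ) ≤ (j.val : ℤ) + 1 := by linarith
      nlinarith
    simp at h1
    linarith
  · intro i hi
    have hie := Finset.mem_erase.mp hi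
    have hgi : g i ≠ 0 := by simpa [hs] using hie.2
    obtain ⟨hfi, hvfi⟩ := hterm i hgi
    refine Or.inr ⟨hfi, ?_⟩
    rw [hvfi]
    have hilt : i < j := lt_of_le_of_ne (s.le_max' i hie.2) hie.1
    have : (i.val : ℤ) + 1 ≤ (j.val : ℤ) := by
      exact_mod_cast Nat.succ_le_of_lt (Fin.lt_iff_val_lt_val.mp hilt)
    nlinarith
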